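/- Let θ: ℝ₊ → ℝ₊ be monotone non-decreasing, and θ̃(r) = (log 2)^{-2} ∫_r^{2r} (1/t) ∫_t^{2t} θ(s)/s ds dt. If θ̃(s) < 1 for all s ∈ [0, 4r], then θ̃'(r) ≤ 1/(r log 2). -/

import Mathlib

/-!
Write `L f (t) = ∫_t^{2t} f(u) du/u`, so that `θ̃ = (log 2)⁻² L (L θ)`. Differentiating under the
integral sign gives `θ̃'(r) = (log 2)⁻² (L θ (2r) - L θ (r)) / r`, and the substitution `u = 2x`
turns the numerator into `∫_r^{2r} (θ(2x) - θ(x)) dx/x`. Monotonicity gives `θ ≤ θ̃`, so `θ < 1`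
on `(0, 4r]`; since also `θ ≥ 0`, the integrand is below `1/x` and the numerator is at most
`log 2`.
-/

open Real MeasureTheory

section

open Set Filter

variable {f g : ℝ → ℝ} {a b c r s t : ℝ}

lemma uIcc_subset_Ioi_zero (ha : 0 < a) (hb : 0 < b) : uIcc a b ⊆ Ioi 0 :=
  fun _ hx => (lt_min ha hb).trans_le hx.1

lemma MonotoneOn.locallyIntegrableOn {s : Set ℝ} (hf : MonotoneOn f s) (hs : IsLocallyClosed s) :
    LocallyIntegrableOn f s volume := by
  rw [locallyIntegrableOn_iff hs]
  exact fun _ hks hk => (hf.mono hks).integrableOn_isCompact hk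

lemma MeasureTheory.LocallyIntegrableOn.intervalIntegrable_of_pos
    (hf : LocallyIntegrableOn f (Ioi 0) volume) (ha : 0 < a) (hb : 0 < b) :
    IntervalIntegrable f volume a b :=
  (hf.integrableOn_compact_subset (uIcc_subset_Ioi_zero ha hb) isCompact_uIcc).intervalIntegrable

lemma MeasureTheory.LocallyIntegrableOn.intervalIntegrable_comp_two_mul
    (hf : LocallyIntegrableOn f (Ioi 0) volume) (hr : 0 < r) :
    IntervalIntegrable (fun x => f (2 * x)) volume r (2 * r) := by
  have := (hf.intervalIntegrable_of_pos (a := 2 * r) (b := 2 * (2 * r)) (by positivity)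
    (by positivity)).comp_mul_left (c := 2)
  rwa [mul_div_cancel_left₀ _ two_ne_zero, mul_div_cancel_left₀ _ two_ne_zero] at this

lemma IntervalIntegrable.div_self_of_pos (hf : IntervalIntegrable f volume a b) (ha : 0 < a)
    (hb : 0 < b) : IntervalIntegrable (fun u => f u / u) volume a b := by
  simpa only [div_eq_mul_inv] using hf.mul_continuousOn
    (continuousOn_inv₀.mono fun _ hx => (uIcc_subset_Ioi_zero ha hb hx).ne')

noncomputable def dyadicLogIntegral (f : ℝ → ℝ) (t : ℝ) : ℝ :=
  ∫ u in t..(2 * t), f u / u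

lemma dyadicLogIntegral_const (c : ℝ) (ht : 0 < t) :
    dyadicLogIntegral (fun _ => c) t = c * log 2 := by
  simp only [dyadicLogIntegral, div_eq_mul_inv, intervalIntegral.integral_const_mul]
  rw [integral_inv_of_pos ht (by positivity), mul_div_cancel_right₀ _ ht.ne']

lemma dyadicLogIntegral_mono (ht : 0 < t) (hf : IntervalIntegrable f volume t (2 * t))
    (hg : IntervalIntegrable g volume t (2 * t)) (hfg : ∀ u ∈ Icc t (2 * t), f u ≤ g u) :
    dyadicLogIntegral f t ≤ dyadicLogIntegral g t :=
  intervalIntegral.integral_mono_on (by linarith) (hf.div_self_of_pos ht (by positivity))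
    (hg.div_self_of_pos ht (by positivity)) fun u hu =>
      div_le_div_of_nonneg_right (hfg u hu) (ht.trans_le hu.1).le

lemma dyadicLogIntegral_eq_sub (hf : LocallyIntegrableOn f (Ioi 0) volume) (ha : 0 < a)
    (ht : 0 < t) :
    dyadicLogIntegral f t = (∫ u in a..(2 * t), f u / u) - ∫ u in a..t, f u / u :=
  (intervalIntegral.integral_interval_sub_left
    ((hf.intervalIntegrable_of_pos ha (by positivity)).div_self_of_pos ha (by positivity))
    ((hf.intervalIntegrable_of_pos ha ht).div_self_of_pos ha ht)).symm

lemma continuousOn_dyadicLogIntegral (hf : LocallyIntegrableOn f (Ioi 0) volume) :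
    ContinuousOn (dyadicLogIntegral f) (Ioi 0) := by
  intro t₀ (ht₀ : 0 < t₀)
  set F : ℝ → ℝ := fun x => ∫ u in (t₀ / 2)..x, f u / u
  have hF : ∀ x ∈ Ioo (t₀ / 2) (4 * t₀), ContinuousAt F x := fun x hx =>
    (intervalIntegral.continuousOn_primitive_interval'
      ((hf.intervalIntegrable_of_pos (by positivity) (by positivity)).div_self_of_pos
        (by positivity) (by positivity)) left_mem_uIcc).continuousAt
      (uIcc_of_le (show t₀ / 2 ≤ 4 * t₀ by linarith) ▸ Icc_mem_nhds hx.1 hx.2)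
  have hsub : ContinuousAt (fun t => F (2 * t) - F t) t₀ :=
    ((hF (2 * t₀) ⟨by linarith, by linarith⟩).comp (continuous_const_mul 2).continuousAt).sub
      (hF t₀ ⟨by linarith, by linarith⟩)
  refine (hsub.congr ?_).continuousWithinAt
  filter_upwards [eventually_gt_nhds ht₀] with t ht
  exact (dyadicLogIntegral_eq_sub hf (by positivity) ht).symm

lemma hasDerivAt_dyadicLogIntegral (hf : ContinuousOn f (Ioi 0)) (hr : 0 < r) :
    HasDerivAt (dyadicLogIntegral f) ((f (2 * r) - f r) / r) r := by
  have hfu : ContinuousOn (fun u => f u / u) (Ioi 0) :=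
    hf.div continuousOn_id fun _ hu => ne_of_gt hu
  have hF : ∀ y > 0, HasDerivAt (fun x => ∫ u in (r / 2)..x, f u / u) (f y / y) y :=
    fun y hy => intervalIntegral.integral_hasDerivAt_right
      ((hfu.mono (uIcc_subset_Ioi_zero (by positivity) hy)).intervalIntegrable)
      (hfu.stronglyMeasurableAtFilter isOpen_Ioi y hy)
      (hfu.continuousAt (Ioi_mem_nhds hy))
  have hsub := ((hF (2 * r) (by positivity)).comp r ((hasDerivAt_id r).const_mul 2)).sub
    (hF r hr)
  refine (hsub.congr_of_eventuallyEq ?_).congr_deriv ?_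
  · filter_upwards [eventually_gt_nhds hr] with t ht
    exact dyadicLogIntegral_eq_sub (hf.locallyIntegrableOn measurableSet_Ioi) (by positivity) ht
  · field_simp

lemma mul_log_two_le_dyadicLogIntegral (hf : MonotoneOn f (Ioi 0)) (hs : 0 < s) (hst : s ≤ t) :
    f s * log 2 ≤ dyadicLogIntegral f t := by
  have ht : 0 < t := hs.trans_le hst
  have hfi := (hf.locallyIntegrableOn isOpen_Ioi.isLocallyClosed).intervalIntegrable_of_pos ht
    (by positivity : (0 : ℝ) < 2 * t)
  rw [← dyadicLogIntegral_const (f s) ht]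
  exact dyadicLogIntegral_mono ht intervalIntegrable_const hfi fun u hu =>
    hf hs (ht.trans_le hu.1 : (0 : ℝ) < u) (hst.trans hu.1)

lemma mul_log_two_sq_le_dyadicLogIntegral_dyadicLogIntegral (hf : MonotoneOn f (Ioi 0))
    (hr : 0 < r) : f r * log 2 ^ 2 ≤ dyadicLogIntegral (dyadicLogIntegral f) r := by
  have hD := (continuousOn_dyadicLogIntegral
    (hf.locallyIntegrableOn isOpen_Ioi.isLocallyClosed)).mono
    (uIcc_subset_Ioi_zero hr (by positivity : (0 : ℝ) < 2 * r))
  rw [sq, ← mul_assoc, ← dyadicLogIntegral_const _ hr]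
  exact dyadicLogIntegral_mono hr intervalIntegrable_const hD.intervalIntegrable fun t ht =>
    mul_log_two_le_dyadicLogIntegral hf hr ht.1

lemma dyadicLogIntegral_two_mul_sub (hf : LocallyIntegrableOn f (Ioi 0) volume) (hr : 0 < r) :
    dyadicLogIntegral f (2 * r) - dyadicLogIntegral f r =
      dyadicLogIntegral (fun x => f (2 * x) - f x) r := by
  have hscale : ∫ x in r..(2 * r), f (2 * x) / x = dyadicLogIntegral f (2 * r) :=
    calc ∫ x in r..(2 * r), f (2 * x) / x = ∫ x in r..(2 * r), 2 * (f (2 * x) / (2 * x)) := by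
          refine intervalIntegral.integral_congr fun x hx => ?_
          have hx : x ≠ 0 := (uIcc_subset_Ioi_zero hr (by positivity) hx).ne'
          field_simp
      _ = dyadicLogIntegral f (2 * r) := by
          rw [intervalIntegral.integral_const_mul,
            intervalIntegral.integral_comp_mul_left (fun u => f u / u) two_ne_zero, smul_eq_mul,
            mul_inv_cancel_left₀ two_ne_zero]
          rfl
  simp only [dyadicLogIntegral, sub_div]
  rw [intervalIntegral.integral_sub
    ((hf.intervalIntegrable_comp_two_mul hr).div_self_of_pos hr (by positivity))
    ((hf.intervalIntegrable_of_pos hr (by positivity)).div_self_of_pos hr (by positivity)),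
    hscale, dyadicLogIntegral]

lemma dyadicLogIntegral_two_mul_sub_le (hf : LocallyIntegrableOn f (Ioi 0) volume) (hr : 0 < r)
    (hc : ∀ x ∈ Icc r (2 * r), f (2 * x) - f x ≤ c) :
    dyadicLogIntegral f (2 * r) - dyadicLogIntegral f r ≤ c * log 2 := by
  rw [dyadicLogIntegral_two_mul_sub hf hr, ← dyadicLogIntegral_const c hr]
  exact dyadicLogIntegral_mono hr
    ((hf.intervalIntegrable_comp_two_mul hr).sub (hf.intervalIntegrable_of_pos hr (by positivity)))
    intervalIntegrable_const hc

end

theorem stmt7 (θ : ℝ → ℝ) (hpos : ∀ r > 0, 0 < θ r)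
    (hmono : MonotoneOn θ (Set.Ioi 0)) (r : ℝ) (hr : 0 < r)
    (hsmall : ∀ s ∈ Set.Ioc (0:ℝ) (4 * r),
      (Real.log 2)⁻¹ ^ 2 * (∫ t in s..(2 * s), (1 / t) * ∫ u in t..(2 * t), θ u / u) < 1) :
    deriv (fun r : ℝ => (Real.log 2)⁻¹ ^ 2 *
        ∫ t in r..(2 * r), (1 / t) * ∫ s in t..(2 * t), θ s / s) r
      ≤ 1 / (r * Real.log 2) := by
  have hθ : LocallyIntegrableOn θ (Set.Ioi 0) volume :=
    hmono.locallyIntegrableOn isOpen_Ioi.isLocallyClosed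
  have htilde : ∀ s, (∫ t in s..(2 * s), (1 / t) * ∫ u in t..(2 * t), θ u / u) =
      dyadicLogIntegral (dyadicLogIntegral θ) s := fun s => by
    simp only [dyadicLogIntegral, one_div_mul_eq_div]
  have hθ_lt_one : ∀ s ∈ Set.Ioc 0 (4 * r), θ s < 1 := fun s hs =>
    calc θ s = (log 2)⁻¹ ^ 2 * (θ s * log 2 ^ 2) := by field_simp
      _ ≤ (log 2)⁻¹ ^ 2 * dyadicLogIntegral (dyadicLogIntegral θ) s := by
        gcongr; exact mul_log_two_sq_le_dyadicLogIntegral_dyadicLogIntegral hmono hs.1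
      _ < 1 := htilde s ▸ hsmall s hs
  have hjump : dyadicLogIntegral θ (2 * r) - dyadicLogIntegral θ r ≤ 1 * log 2 :=
    dyadicLogIntegral_two_mul_sub_le hθ hr fun x hx => by
      linarith [hθ_lt_one (2 * x) ⟨by linarith [hx.1], by linarith [hx.2]⟩,
        hpos x (hr.trans_le hx.1)]
  simp only [htilde]
  rw [((hasDerivAt_dyadicLogIntegral (continuousOn_dyadicLogIntegral hθ) hr).const_mul _).deriv]
  calc (log 2)⁻¹ ^ 2 * ((dyadicLogIntegral θ (2 * r) - dyadicLogIntegral θ r) / r)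
      ≤ (log 2)⁻¹ ^ 2 * (1 * log 2 / r) := by gcongr
    _ = 1 / (r * log 2) := by field_simp
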